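/- arXiv:2005.01223 — 2 statements merged into one kernel-verified Lean document; each statement's English description precedes it below -/
import Mathlib

section
/- Let c > 0 and S ∈ ℕ with S ≥ 1. If x is a standard complex Gaussian vector in ℂ^S, then P(‖x‖ ≤ c√S) ≤ e^{S(1 + 2 log c)} / √(2πS). -/
open MeasureTheory

/-!
The Gaussian density is at most `π^{-S}`, so the probability is at most `π^{-S}` times the volume
of the ball of radius `c √S` in `ℂ^S ≅ ℝ^{2S}`, which is `π^S (c √S)^{2S} / S!`. This leaves
`c^{2S} S^S / S!`, and Stirling's lower bound `S! ≥ √(2πS) (S/e)^S` finishes the estimate.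
-/

open Real in
theorem Complex.volume_sqrt_sum_norm_sq_le {ι : Type*} [Fintype ι] [Nonempty ι] (r : ℝ) :
    volume {x : ι → ℂ | √(∑ i, ‖x i‖ ^ 2) ≤ r} =
      .ofReal r ^ (2 * Fintype.card ι) *
        .ofReal (π ^ Fintype.card ι / (Fintype.card ι).factorial) := by
  have h := Complex.volume_sum_rpow_le (ι := ι) one_le_two r
  simp only [Real.rpow_two, ← Real.sqrt_eq_rpow] at h
  rw [h]
  congr 3
  · norm_num
  · rw [show (2 * (Fintype.card ι : ℝ)) / 2 + 1 = ((Fintype.card ι : ℕ) : ℝ) + 1 by ring,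
      Real.Gamma_nat_eq_factorial]

open Real Nat in
theorem pow_self_div_factorial_le {n : ℕ} (hn : n ≠ 0) :
    (n : ℝ) ^ n / n ! ≤ exp n / √(2 * π * n) := by
  rw [div_le_div_iff₀ (by positivity) (by positivity), ← exp_one_pow]
  calc (n : ℝ) ^ n * √(2 * π * n) = exp 1 ^ n * (√(2 * π * n) * (n / exp 1) ^ n) := by
        field_simp
        rw [← mul_pow, mul_div_cancel₀ _ (exp_pos 1).ne']
    _ ≤ exp 1 ^ n * n ! := by gcongr; exact Stirling.le_factorial_stirling n

open Real in
theorem ofReal_inv_pow_mul_exp_neg_le {ι : Type*} [Fintype ι] (n : ℕ) (x : ι → ℂ) :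
    ENNReal.ofReal ((π ^ n)⁻¹ * exp (-(∑ a, ‖x a‖ ^ 2))) ≤ ENNReal.ofReal (π ^ n)⁻¹ := by
  refine ENNReal.ofReal_le_ofReal (mul_le_of_le_one_right (by positivity) ?_)
  exact exp_le_one_iff.2 (neg_nonpos.2 (by positivity))

/-- small-ball estimate for the standard complex Gaussian.
Let `c > 0` and `S ≥ 1`.  If `x` is a standard complex Gaussian vector in `ℂ^S`
(density `π^{-S} exp (-‖x‖²)`, with `‖x‖² = ∑ a, ‖x a‖²` the Hermitian norm), then
`P(‖x‖ ≤ c √S) ≤ exp (S (1 + 2 log c)) / √(2 π S)`. -/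
theorem stmt3 (S : ℕ) (hS : 1 ≤ S) (c : ℝ) (hc : 0 < c) :
    (volume.withDensity (fun x : Fin S → ℂ =>
        ENNReal.ofReal ((Real.pi ^ S)⁻¹ * Real.exp (-(∑ a, ‖x a‖ ^ 2)))))
      {x : Fin S → ℂ | Real.sqrt (∑ a, ‖x a‖ ^ 2) ≤ c * Real.sqrt S}
      ≤ ENNReal.ofReal (Real.exp (S * (1 + 2 * Real.log c)) / Real.sqrt (2 * Real.pi * S)) := by
  have : Nonempty (Fin S) := Fin.pos_iff_nonempty.mp hS
  have hdensity := withDensity_mono (μ := (volume : Measure (Fin S → ℂ)))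
    (Filter.Eventually.of_forall (ofReal_inv_pow_mul_exp_neg_le S))
  refine (hdensity _).trans ?_
  rw [withDensity_const, Measure.smul_apply, smul_eq_mul, Complex.volume_sqrt_sum_norm_sq_le,
    Fintype.card_fin, ← ENNReal.ofReal_pow (by positivity), ← ENNReal.ofReal_mul (by positivity),
    ← ENNReal.ofReal_mul (by positivity)]
  refine ENNReal.ofReal_le_ofReal ?_
  have hexp : Real.exp (S * (1 + 2 * Real.log c)) = Real.exp S * c ^ (2 * S) := by
    rw [mul_add, mul_one, Real.exp_add, ← Real.exp_log (pow_pos hc (2 * S)), Real.log_pow]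
    push_cast; ring_nf
  calc (Real.pi ^ S)⁻¹ * ((c * √S) ^ (2 * S) * (Real.pi ^ S / S.factorial))
      = c ^ (2 * S) * ((S : ℝ) ^ S / S.factorial) := by
        rw [mul_pow, pow_mul (√(S:ℝ)), Real.sq_sqrt (Nat.cast_nonneg S)]
        field_simp
    _ ≤ c ^ (2 * S) * (Real.exp S / √(2 * Real.pi * S)) := by
        gcongr c ^ (2 * S) * ?_
        exact pow_self_div_factorial_le (by omega)
    _ = _ := by rw [hexp]; ring
end

section
/- Let u, v be nonzero vectors in a complex inner product space, and define w_a = v_a/u_a coordinatewise (assuming all u_a ≠ 0) in ℂ^S. Then the Fubini–Study norm of v at u, defined as ‖P_{u^⊥}(v)‖/‖u‖ where P_{u^⊥} is the orthogonal projection onto u^⊥, satisfies ‖v‖_u² = (1/2) · (Σ_{a,b} |u_a|²|u_b|² |w_a − w_b|²) / (Σ_{a,b} |u_a|²|u_b|²), and in particular ‖v‖_u ≤ max_a |w_a|. -/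
/-! Writing `C = ⟪u, v⟫`, the component of `v` orthogonal to `u` has squared norm
`‖v‖² - |C|² / ‖u‖²`. Clearing the denominators `u a`, `u b` turns the coordinate sum into
`∑ a b, |v a u b - v b u a|²`, which by Lagrange's identity is `2 (‖u‖² ‖v‖² - |C|²)`, while the
denominator is `‖u‖⁴`. The bound holds because projecting onto `u^⊥` does not increase the norm
and `|v a| ≤ (max_b |w b|) |u a|` coordinatewise. -/

open Finset RCLike ComplexConjugate

section

variable {𝕜 E : Type*} [RCLike 𝕜] [NormedAddCommGroup E] [InnerProductSpace 𝕜 E]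

theorem norm_sub_inner_div_smul_sq (u v : E) :
    ‖v - (inner 𝕜 u v / (‖u‖ : 𝕜) ^ 2) • u‖ ^ 2 = ‖v‖ ^ 2 - ‖inner 𝕜 u v‖ ^ 2 / ‖u‖ ^ 2 := by
  rcases eq_or_ne u 0 with rfl | hu
  · simp
  have hu' : ‖u‖ ≠ 0 := norm_ne_zero_iff.mpr hu
  have hvu : inner 𝕜 v u = conj (inner 𝕜 u v) := (inner_conj_symm v u).symm
  rw [norm_sub_sq (𝕜 := 𝕜), inner_smul_right, norm_smul, hvu, div_mul_eq_mul_div, mul_conj,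
    norm_div, norm_pow, norm_ofReal, abs_norm, ← ofReal_pow, ← ofReal_pow, ← ofReal_div, ofReal_re]
  field_simp
  ring

theorem norm_sub_inner_div_smul_le (u v : E) :
    ‖v - (inner 𝕜 u v / (‖u‖ : 𝕜) ^ 2) • u‖ ≤ ‖v‖ := by
  refine (sq_le_sq₀ (norm_nonneg _) (norm_nonneg _)).mp ?_
  rw [norm_sub_inner_div_smul_sq]
  linarith [div_nonneg (sq_nonneg ‖inner 𝕜 u v‖) (sq_nonneg ‖u‖)]

end

theorem norm_sq_mul_norm_sq_mul_norm_div_sub_div_sq {K : Type*} [NormedField K] {x y : K}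
    (hx : x ≠ 0) (hy : y ≠ 0) (p q : K) :
    ‖x‖ ^ 2 * ‖y‖ ^ 2 * ‖p / x - q / y‖ ^ 2 = ‖p * y - q * x‖ ^ 2 := by
  rw [← mul_pow, ← mul_pow, ← norm_mul, ← norm_mul]
  congr 2
  field_simp

namespace EuclideanSpace

variable {𝕜 ι : Type*} [RCLike 𝕜] [Fintype ι]

theorem inner_eq_sum (u v : EuclideanSpace 𝕜 ι) : inner 𝕜 u v = ∑ a, conj (u a) * v a := by
  simp [PiLp.inner_apply, mul_comm]

theorem sum_sum_norm_sq_mul_norm_sq (x y : EuclideanSpace 𝕜 ι) :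
    ∑ a, ∑ b, ‖x a‖ ^ 2 * ‖y b‖ ^ 2 = ‖x‖ ^ 2 * ‖y‖ ^ 2 := by
  rw [← sum_mul_sum, norm_sq_eq, norm_sq_eq]

theorem norm_le_mul_norm_of_forall {u v : EuclideanSpace 𝕜 ι} {M : ℝ} (hM : 0 ≤ M)
    (h : ∀ a, ‖v a‖ ≤ M * ‖u a‖) : ‖v‖ ≤ M * ‖u‖ := by
  refine (sq_le_sq₀ (norm_nonneg _) (by positivity)).mp ?_
  rw [norm_sq_eq, mul_pow, norm_sq_eq, mul_sum]
  gcongr with a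
  rw [← mul_pow]
  exact pow_le_pow_left₀ (norm_nonneg _) (h a) 2

/-- Lagrange's identity. -/
theorem sum_sum_norm_mul_sub_mul_sq (u v : EuclideanSpace 𝕜 ι) :
    ∑ a, ∑ b, ‖v a * u b - v b * u a‖ ^ 2 = 2 * (‖u‖ ^ 2 * ‖v‖ ^ 2 - ‖inner 𝕜 u v‖ ^ 2) := by
  have hcross : ∑ a, ∑ b, re (conj (v a * u b) * (v b * u a)) = ‖inner 𝕜 u v‖ ^ 2 := by
    have : ∑ a, ∑ b, conj (v a * u b) * (v b * u a) = conj (inner 𝕜 u v) * inner 𝕜 u v := by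
      rw [inner_eq_sum, map_sum, sum_mul_sum]
      refine sum_congr rfl fun a _ => sum_congr rfl fun b _ => ?_
      simp only [map_mul, conj_conj]
      ring
    rw [← ofReal_re (K := 𝕜) (_ ^ 2), ofReal_pow, ← RCLike.conj_mul, ← this]
    simp only [map_sum]
  have hterm (a b : ι) : ‖v a * u b - v b * u a‖ ^ 2 = ‖v a‖ ^ 2 * ‖u b‖ ^ 2 + ‖u a‖ ^ 2 * ‖v b‖ ^ 2
      - 2 * re (conj (v a * u b) * (v b * u a)) := by
    rw [norm_sub_sq (𝕜 := 𝕜), inner_apply']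
    simp only [norm_mul, mul_pow]
    ring
  simp only [hterm, sum_add_distrib, sum_sub_distrib]
  rw [sum_sum_norm_sq_mul_norm_sq, sum_sum_norm_sq_mul_norm_sq]
  simp only [← mul_sum]
  rw [hcross]
  ring

end EuclideanSpace

theorem stmt5_general (S : ℕ) (hS : 0 < S) (u v : EuclideanSpace ℂ (Fin S))
    (hu : ∀ a, u a ≠ 0) :
    (‖v - ((inner ℂ u v : ℂ) / (‖u‖ : ℂ) ^ 2) • u‖ / ‖u‖) ^ 2
      = (1 / 2) * (∑ a, ∑ b, ‖u a‖ ^ 2 * ‖u b‖ ^ 2 * ‖v a / u a - v b / u b‖ ^ 2)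
          / (∑ a, ∑ b, ‖u a‖ ^ 2 * ‖u b‖ ^ 2)
    ∧ ‖v - ((inner ℂ u v : ℂ) / (‖u‖ : ℂ) ^ 2) • u‖ / ‖u‖
        ≤ Finset.univ.sup' (Finset.univ_nonempty_iff.mpr ⟨⟨0, hS⟩⟩)
            (fun a => ‖v a / u a‖) := by
  have hu_pos : 0 < ‖u‖ := norm_pos_iff.mpr fun h => hu ⟨0, hS⟩ (by simp [h])
  -- the lemma's `RCLike.ofReal` coercion matches `Complex.ofReal` only up to defeq, not for `rw`
  have hproj : ‖v - (inner ℂ u v / (‖u‖ : ℂ) ^ 2) • u‖ ^ 2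
      = ‖v‖ ^ 2 - ‖inner ℂ u v‖ ^ 2 / ‖u‖ ^ 2 :=
    norm_sub_inner_div_smul_sq u v
  constructor
  · simp only [norm_sq_mul_norm_sq_mul_norm_div_sub_div_sq (hu _) (hu _)]
    rw [div_pow, hproj, EuclideanSpace.sum_sum_norm_mul_sub_mul_sq,
      EuclideanSpace.sum_sum_norm_sq_mul_norm_sq]
    field_simp
  · set M := Finset.univ.sup' _ fun a => ‖v a / u a‖
    have hle (a : Fin S) : ‖v a / u a‖ ≤ M := Finset.le_sup' (fun a => ‖v a / u a‖) (mem_univ a)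
    have hv_le : ‖v‖ ≤ M * ‖u‖ := by
      refine EuclideanSpace.norm_le_mul_norm_of_forall ((norm_nonneg _).trans (hle ⟨0, hS⟩))
        fun a => ?_
      rw [← div_mul_cancel₀ (v a) (hu a), norm_mul]
      gcongr
      exact hle a
    rw [div_le_iff₀ hu_pos]
    exact (norm_sub_inner_div_smul_le u v).trans hv_le

/-- Fubini–Study norm in coordinates.  Let `u, v ∈ ℂ^S` be nonzero with all
coordinates of `u` nonzero, and set `w a = v a / u a`.  The Fubini–Study norm
`‖v‖_u = ‖P_{u^⊥}(v)‖ / ‖u‖`, where `P_{u^⊥}(v) = v - (⟨v,u⟩/‖u‖²) u`, satisfies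
`‖v‖_u² = ½ (∑_{a,b} |u a|²|u b|² |w a - w b|²) / (∑_{a,b} |u a|²|u b|²)`,
and in particular `‖v‖_u ≤ max_a |w a|`. -/
theorem stmt5 (S : ℕ) (hS : 0 < S) (u v : EuclideanSpace ℂ (Fin S))
    (hu : ∀ a, u a ≠ 0) (hune : u ≠ 0) (hv : v ≠ 0) :
    (‖v - ((inner ℂ u v : ℂ) / (‖u‖ : ℂ) ^ 2) • u‖ / ‖u‖) ^ 2
      = (1 / 2) * (∑ a, ∑ b, ‖u a‖ ^ 2 * ‖u b‖ ^ 2 * ‖v a / u a - v b / u b‖ ^ 2)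
          / (∑ a, ∑ b, ‖u a‖ ^ 2 * ‖u b‖ ^ 2)
    ∧ ‖v - ((inner ℂ u v : ℂ) / (‖u‖ : ℂ) ^ 2) • u‖ / ‖u‖
        ≤ Finset.univ.sup' (Finset.univ_nonempty_iff.mpr ⟨⟨0, hS⟩⟩)
            (fun a => ‖v a / u a‖) :=
  stmt5_general S hS u v hu
end
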